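/- Invariant of banknote-contracts: at all reachable states of the φ_$ state machine, the coins held by the contract equal the initial deposit d plus d_0 if and only if there is an active lost claim; i.e., coins = d when ActiveLostClaim = 'No active claim' (and serial ≠ ⊥), and coins = d + d_0 when ActiveLostClaim = 'Claim by pid at time t', and coins = 0 after termination (serial = ⊥). -/
import Mathlib


/-- State of a banknote-contract, including the coins it currently holds. -/
structure BState where
  serial : Option ℕ
  claim : Option (ℕ × ℕ)
  coins : ℕ

/-- The transitions of the banknote-contract circuit φ_$ with coin accounting:
filing a claim deposits `d_0`; challenging a claim or settling an unchallenged claim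
releases `d_0`; recovering with a valid certificate releases all coins and terminates. -/
inductive BStep (validCert : ℕ → ℕ → Prop) (d0 ttr : ℕ) : ℕ → BState → BState → Prop
  | lost (pid t s x : ℕ) :
      BStep validCert d0 ttr t ⟨some s, none, x⟩ ⟨some s, some (pid, t), x + d0⟩
  | recover (t s c x : ℕ) (h : validCert s c) :
      BStep validCert d0 ttr t ⟨some s, none, x⟩ ⟨none, none, 0⟩
  | challenge (t s c s' p0 t0 x : ℕ) (h : validCert s c) :
      BStep validCert d0 ttr t ⟨some s, some (p0, t0), x⟩ ⟨some s', none, x - d0⟩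
  | unchallenged (t s s' p0 t0 x : ℕ) (h : t - t0 > ttr) :
      BStep validCert d0 ttr t ⟨some s, some (p0, t0), x⟩ ⟨some s', none, x - d0⟩

/-- Reachability under the contract transitions (at arbitrary times). -/
def BReach (validCert : ℕ → ℕ → Prop) (d0 ttr : ℕ) : BState → BState → Prop :=
  Relation.ReflTransGen (fun σ σ' => ∃ t, BStep validCert d0 ttr t σ σ')

/-- Conservation-of-coins invariant: starting from initial deposit `d` and serial `s`, at
every reachable state the contract holds `d` coins when there is no active claim (and it
has not terminated), `d + d_0` coins when a lost claim is active, and `0` coins after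
termination. -/
theorem stmt18 (validCert : ℕ → ℕ → Prop) (d0 ttr d s : ℕ)
    (σ : BState) (h : BReach validCert d0 ttr ⟨some s, none, d⟩ σ) :
    (σ.claim = none → σ.serial ≠ none → σ.coins = d) ∧
    (σ.claim ≠ none → σ.coins = d + d0) ∧
    (σ.serial = none → σ.coins = 0) := by
  induction h with
  | refl => simp
  | tail hab hstep ih =>
    obtain ⟨t, hs⟩ := hstep
    cases hs with
    | lost pid t s x =>
      obtain ⟨h1, _, _⟩ := ih
      simp at h1 ⊢
      omega
    | recover t s c x h => simp
    | challenge t s c s' p0 t0 x h =>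
      obtain ⟨_, h2, _⟩ := ih
      simp at h2 ⊢
      omega
    | unchallenged t s s' p0 t0 x h =>
      obtain ⟨_, h2, _⟩ := ih
      simp at h2 ⊢
      omega
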